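/- arXiv:2102.09127 — 4 statements merged into one kernel-verified Lean document; each statement's English description precedes it below -/
import Mathlib

section
/- Consider the linear program: maximize (1/N)∑_{n=1}^N ∑_{k=1}^K Z_{n,k} a_k(x_n) over matrices Z ∈ [0,1]^{N×K}, subject to (1/N)∑_{n=1}^N ∑_{k=1}^K Z_{n,k} c_k ≤ b and ∑_{k=1}^K Z_{n,k} = 1 for every n, where the costs c_k ≥ 0 satisfy c_{base} = 0 for some index base, and the accuracy values a_k(x_n) ∈ [0,1] are drawn i.i.d. from a continuous distribution. Then with probability 1, the optimal solution Z* of this LP satisfies ‖Z*_{n,·}‖₀ = 1 (i.e., the n-th row has exactly one nonzero entry) for all n except at most one index. -/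
/-!
If two rows of an optimal `Z` were not singletons, each would have two fractional entries
`0 < Z n k, Z n k' < 1`, and shifting mass between them is a feasible move in either direction.
Of the two-parameter family of such moves in the two rows, a one-parameter family keeps the
budget fixed; for generic accuracies it changes the objective, so one sign strictly improves
it, contradicting optimality. Genericity fails only on finitely many hyperplanes of accuracy
space, a null set for any distribution absolutely continuous with respect to Lebesgue measure.
-/

open MeasureTheory Set Filter Topology
open scoped Finset

theorem ae_ne_zero_of_linearMap {E : Type*} [NormedAddCommGroup E] [NormedSpace ℝ E]
    [MeasurableSpace E] [BorelSpace E] [FiniteDimensional ℝ E] {μ ν : Measure E}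
    [ν.IsAddHaarMeasure] (hμ : μ ≪ ν) {L : E →ₗ[ℝ] ℝ} (hL : L ≠ 0) :
    ∀ᵐ x ∂μ, L x ≠ 0 :=
  hμ.ae_le <| measure_mono_null (fun x hx => by simpa using hx)
    (Measure.addHaar_submodule ν (LinearMap.ker L) fun h => hL (LinearMap.ker_eq_top.mp h))

theorem exists_mul_add_mul_eq_zero_and_pos {p₁ p₂ q₁ q₂ : ℝ} (hq₁ : q₁ ≠ 0) (hq₂ : q₂ ≠ 0)
    (hpq : p₁ ≠ 0 → p₂ ≠ 0 → p₂ * q₁ ≠ p₁ * q₂) :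
    ∃ s t : ℝ, s * p₁ + t * p₂ = 0 ∧ 0 < s * q₁ + t * q₂ := by
  by_cases hp₁ : p₁ = 0
  · exact ⟨q₁, 0, by simp [hp₁], by simp [← sq]; positivity⟩
  by_cases hp₂ : p₂ = 0
  · exact ⟨0, q₂, by simp [hp₂], by simp [← sq]; positivity⟩
  set d := p₂ * q₁ - p₁ * q₂
  have hd : d ≠ 0 := sub_ne_zero.mpr (hpq hp₁ hp₂)
  refine ⟨d * p₂, -(d * p₁), by ring, ?_⟩
  have hsq : d * p₂ * q₁ + -(d * p₁) * q₂ = d ^ 2 := by ring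
  rw [hsq]
  positivity

section

variable {ι κ : Type*}

theorem exists_ne_mem_Ioo_of_card_ne_one [Fintype κ] [DecidableEq κ] {z : κ → ℝ}
    (hz : ∀ k, 0 ≤ z k) (hsum : ∑ k, z k = 1) (hcard : #{k | z k ≠ 0} ≠ 1) :
    ∃ k k', k ≠ k' ∧ z k ∈ Ioo 0 1 ∧ z k' ∈ Ioo 0 1 := by
  obtain ⟨k₀, -, hk₀⟩ := Finset.exists_ne_zero_of_sum_ne_zero (hsum ▸ one_ne_zero)
  have hone : 1 < #{k | z k ≠ 0} :=
    (Finset.one_le_card.mpr ⟨k₀, by simpa using hk₀⟩).lt_of_ne' hcard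
  obtain ⟨k, hk, k', hk', hkk'⟩ := Finset.one_lt_card.mp hone
  simp only [Finset.mem_filter, Finset.mem_univ, true_and] at hk hk'
  have hpos : ∀ j, z j ≠ 0 → 0 < z j := fun j hj => (hz j).lt_of_ne' hj
  have hpair : z k + z k' ≤ 1 := hsum ▸ (Finset.sum_pair hkk').symm.trans_le
    (Finset.sum_le_sum_of_subset_of_nonneg (Finset.subset_univ _) fun j _ _ => hz j)
  exact ⟨k, k', hkk', ⟨hpos k hk, by linarith [hpos k' hk']⟩,
    ⟨hpos k' hk', by linarith [hpos k hk]⟩⟩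

theorem exists_pos_add_mul_mem_Icc [Finite ι] [Finite κ] {Z D : ι → κ → ℝ}
    (hZ : ∀ n k, Z n k ∈ Icc 0 1) (hD : ∀ n k, D n k ≠ 0 → Z n k ∈ Ioo 0 1) :
    ∃ ε > 0, ∀ n k, Z n k + ε * D n k ∈ Icc 0 1 := by
  have h : ∀ᶠ ε in 𝓝[>] (0 : ℝ), ∀ n k, Z n k + ε * D n k ∈ Icc 0 1 := by
    refine eventually_all.2 fun n => eventually_all.2 fun k => ?_
    by_cases hnk : D n k = 0
    · exact Eventually.of_forall fun ε => by simpa [hnk] using hZ n k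
    have hcont : Tendsto (fun ε : ℝ => Z n k + ε * D n k) (𝓝 0) (𝓝 (Z n k)) := by
      simpa using ((continuous_id.mul continuous_const).const_add (Z n k)).tendsto (0 : ℝ)
    obtain ⟨hpos, hlt⟩ := hD n k hnk
    exact nhdsWithin_le_nhds <|
      (hcont.eventually (Ioo_mem_nhds hpos hlt)).mono fun ε hε => Ioo_subset_Icc_self hε
  exact (h.and self_mem_nhdsWithin).exists.imp fun ε hε => ⟨hε.2, hε.1⟩

theorem sum_sum_add_mul_mul [Fintype ι] [Fintype κ] (Z D g : ι → κ → ℝ) (ε : ℝ) :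
    ∑ n, ∑ k, (Z n k + ε * D n k) * g n k =
      ∑ n, ∑ k, Z n k * g n k + ε * ∑ n, ∑ k, D n k * g n k := by
  simp only [add_mul, mul_assoc, Finset.sum_add_distrib, Finset.mul_sum]

def IsFeasible [Fintype ι] [Fintype κ] (c : κ → ℝ) (w B : ℝ) (W : ι → κ → ℝ) : Prop :=
  (∀ n k, W n k ∈ Icc (0 : ℝ) 1) ∧ w * ∑ n, ∑ k, W n k * c k ≤ B ∧ ∀ n, ∑ k, W n k = 1

theorem sum_sum_mul_nonpos_of_optimal [Fintype ι] [Fintype κ] {c : κ → ℝ} {a : ι → κ → ℝ}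
    {w B : ℝ} (hw : 0 < w) {Z : ι → κ → ℝ} (hZ : IsFeasible c w B Z)
    (hopt : ∀ W, IsFeasible c w B W → w * ∑ n, ∑ k, W n k * a n k ≤ w * ∑ n, ∑ k, Z n k * a n k)
    {D : ι → κ → ℝ} (hDsum : ∀ n, ∑ k, D n k = 0) (hDc : ∑ n, ∑ k, D n k * c k = 0)
    (hDsupp : ∀ n k, D n k ≠ 0 → Z n k ∈ Ioo 0 1) :
    ∑ n, ∑ k, D n k * a n k ≤ 0 := by
  obtain ⟨hZ01, hZc, hZsum⟩ := hZ
  obtain ⟨ε, hε, hε01⟩ := exists_pos_add_mul_mem_Icc hZ01 hDsupp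
  have hW : IsFeasible c w B fun n k => Z n k + ε * D n k := by
    refine ⟨hε01, ?_, fun n => ?_⟩
    · simpa [sum_sum_add_mul_mul Z D (fun _ k => c k), hDc] using hZc
    · simp [Finset.sum_add_distrib, ← Finset.mul_sum, hZsum, hDsum]
  have hgain := hopt _ hW
  rw [sum_sum_add_mul_mul, mul_add, add_le_iff_nonpos_right] at hgain
  exact nonpos_of_mul_nonpos_right (nonpos_of_mul_nonpos_right hgain hw) hε

def exchange [DecidableEq ι] [DecidableEq κ] (n : ι) (k k' : κ) : ι → κ → ℝ :=
  Pi.single n (Pi.single k 1 - Pi.single k' 1)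

theorem sum_exchange_apply [DecidableEq ι] [DecidableEq κ] [Fintype κ] (n m : ι) (k k' : κ) :
    ∑ j, exchange n k k' m j = 0 := by
  by_cases h : m = n
  · subst h; simp [exchange, Finset.sum_sub_distrib]
  · simp [exchange, h]

theorem sum_sum_exchange_mul [DecidableEq ι] [DecidableEq κ] [Fintype ι] [Fintype κ] (n : ι)
    (k k' : κ) (g : ι → κ → ℝ) :
    ∑ m, ∑ j, exchange n k k' m j * g m j = g n k - g n k' := by
  rw [Fintype.sum_eq_single n fun m hm => by simp [exchange, hm]]
  simp [exchange, sub_mul, Finset.sum_sub_distrib, Pi.single_apply]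

theorem eq_and_mem_of_exchange_apply_ne_zero [DecidableEq ι] [DecidableEq κ] {n m : ι} {k k' j : κ}
    (h : exchange n k k' m j ≠ 0) : m = n ∧ (j = k ∨ j = k') := by
  have hm : m = n := by
    by_contra hm
    simp [exchange, hm] at h
  subst hm
  refine ⟨rfl, ?_⟩
  by_contra hj
  push Not at hj
  simp [exchange, hj.1, hj.2] at h

-- Exactly what makes every budget-neutral exchange between two rows change the objective.
def IsGenericAccuracy (c : κ → ℝ) (a : ι → κ → ℝ) : Prop :=
  (∀ n k k', k ≠ k' → a n k ≠ a n k') ∧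
  ∀ n₁ n₂ k₁ k₁' k₂ k₂', n₁ ≠ n₂ → c k₁ ≠ c k₁' → c k₂ ≠ c k₂' →
    (c k₂ - c k₂') * (a n₁ k₁ - a n₁ k₁') ≠ (c k₁ - c k₁') * (a n₂ k₂ - a n₂ k₂')

def coord (n : ι) (k : κ) : (ι → κ → ℝ) →ₗ[ℝ] ℝ :=
  (LinearMap.proj (R := ℝ) (φ := fun _ : κ => ℝ) k).comp (LinearMap.proj n)

theorem ae_isGenericAccuracy [Fintype ι] [Fintype κ] (c : κ → ℝ) {μ : Measure (ι → κ → ℝ)}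
    (hμ : μ ≪ volume) : ∀ᵐ a ∂μ, IsGenericAccuracy c a := by
  classical
  have hae : ∀ {L L' : (ι → κ → ℝ) →ₗ[ℝ] ℝ}, L ≠ L' → ∀ᵐ a ∂μ, L a ≠ L' a := fun h =>
    (ae_ne_zero_of_linearMap hμ (sub_ne_zero.mpr h)).mono fun a ha => sub_ne_zero.mp ha
  simp only [IsGenericAccuracy, eventually_and, ae_all_iff, eventually_imp_distrib_left]
  refine ⟨fun n k k' hk => hae (L := coord n k) (L' := coord n k') fun h => ?_,
    fun n₁ n₂ k₁ k₁' k₂ k₂' hn hc₁ hc₂ =>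
      hae (L := (c k₂ - c k₂') • (coord n₁ k₁ - coord n₁ k₁'))
        (L' := (c k₁ - c k₁') • (coord n₂ k₂ - coord n₂ k₂')) fun h => ?_⟩
  · simpa [coord, hk.symm] using LinearMap.congr_fun h (Pi.single n (Pi.single k 1))
  · have hk₁ : k₁' ≠ k₁ := fun h => hc₁ (h ▸ rfl)
    simpa [coord, hk₁, Ne.symm hn, sub_eq_zero, hc₂] using
      LinearMap.congr_fun h (Pi.single n₁ (Pi.single k₁ 1))

theorem card_filter_card_ne_zero_ne_one_le_one [Fintype ι] [Fintype κ] [DecidableEq ι]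
    [DecidableEq κ] {c : κ → ℝ} {a Z : ι → κ → ℝ} (ha : IsGenericAccuracy c a)
    (hZ0 : ∀ n k, 0 ≤ Z n k) (hZsum : ∀ n, ∑ k, Z n k = 1)
    (hdir : ∀ D : ι → κ → ℝ, (∀ n, ∑ k, D n k = 0) → ∑ n, ∑ k, D n k * c k = 0 →
      (∀ n k, D n k ≠ 0 → Z n k ∈ Ioo 0 1) → ∑ n, ∑ k, D n k * a n k ≤ 0) :
    #{n | #{k | Z n k ≠ 0} ≠ 1} ≤ 1 := by
  by_contra! hcard
  obtain ⟨n₁, hn₁, n₂, hn₂, hn⟩ := Finset.one_lt_card.mp hcard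
  simp only [Finset.mem_filter, Finset.mem_univ, true_and] at hn₁ hn₂
  obtain ⟨k₁, k₁', hk₁, hZ₁, hZ₁'⟩ := exists_ne_mem_Ioo_of_card_ne_one (hZ0 n₁) (hZsum n₁) hn₁
  obtain ⟨k₂, k₂', hk₂, hZ₂, hZ₂'⟩ := exists_ne_mem_Ioo_of_card_ne_one (hZ0 n₂) (hZsum n₂) hn₂
  obtain ⟨s, t, hcost, hgain⟩ := exists_mul_add_mul_eq_zero_and_pos
    (sub_ne_zero.mpr (ha.1 n₁ k₁ k₁' hk₁)) (sub_ne_zero.mpr (ha.1 n₂ k₂ k₂' hk₂))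
    fun h₁ h₂ => ha.2 n₁ n₂ k₁ k₁' k₂ k₂' hn (sub_ne_zero.mp h₁) (sub_ne_zero.mp h₂)
  set D : ι → κ → ℝ := fun m j => s * exchange n₁ k₁ k₁' m j + t * exchange n₂ k₂ k₂' m j
  have hpair : ∀ g : ι → κ → ℝ, ∑ m, ∑ j, D m j * g m j =
      s * (g n₁ k₁ - g n₁ k₁') + t * (g n₂ k₂ - g n₂ k₂') := fun g => by
    simp only [D, add_mul, mul_assoc, Finset.sum_add_distrib, ← Finset.mul_sum,
      sum_sum_exchange_mul]
  refine (hdir D (fun m => ?_) ?_ fun m j hD => ?_).not_gt (by rwa [hpair])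
  · simp [D, Finset.sum_add_distrib, ← Finset.mul_sum, sum_exchange_apply]
  · exact (hpair fun _ j => c j).trans hcost
  · have hex : exchange n₁ k₁ k₁' m j ≠ 0 ∨ exchange n₂ k₂ k₂' m j ≠ 0 := by
      by_contra! h
      simp [D, h] at hD
    rcases hex with h | h <;> obtain ⟨rfl, rfl | rfl⟩ := eq_and_mem_of_exchange_apply_ne_zero h <;>
      assumption

end

theorem stmt_4_general {N K : ℕ} (hN : 0 < N)
    (c : Fin K → ℝ) (b : ℝ)
    (μ : Measure (Fin N → Fin K → ℝ))
    (hac : μ ≪ volume) :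
    ∀ᵐ a ∂μ, ∀ Z : Fin N → Fin K → ℝ,
      ((∀ n k, Z n k ∈ Set.Icc (0:ℝ) 1) ∧
        (1 / N : ℝ) * ∑ n, ∑ k, Z n k * c k ≤ b ∧
        (∀ n, ∑ k, Z n k = 1) ∧
        (∀ W : Fin N → Fin K → ℝ,
          (∀ n k, W n k ∈ Set.Icc (0:ℝ) 1) →
          (1 / N : ℝ) * ∑ n, ∑ k, W n k * c k ≤ b →
          (∀ n, ∑ k, W n k = 1) →
          (1 / N : ℝ) * ∑ n, ∑ k, W n k * a n k ≤
            (1 / N : ℝ) * ∑ n, ∑ k, Z n k * a n k)) →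
      (((Finset.univ : Finset (Fin N)).filter fun n =>
        (((Finset.univ : Finset (Fin K)).filter fun k => Z n k ≠ 0)).card ≠ 1)).card ≤ 1 := by
  filter_upwards [ae_isGenericAccuracy c hac] with a ha
  rintro Z ⟨hZ01, hZb, hZsum, hopt⟩
  have hw : (0 : ℝ) < 1 / N := by positivity
  exact card_filter_card_ne_zero_ne_one_le_one ha (fun n k => (hZ01 n k).1) hZsum
    fun D => sum_sum_mul_nonpos_of_optimal hw ⟨hZ01, hZb, hZsum⟩
      fun W hW => hopt W hW.1 hW.2.1 hW.2.2

/-- Sparsity of the LP relaxation of the API selection problem: almost surely over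
the accuracy values, every optimal LP solution has exactly one nonzero entry in
every row except at most one. -/
theorem stmt_4 {N K : ℕ} (hN : 0 < N) (hK : 0 < K)
    (c : Fin K → ℝ) (base : Fin K) (b : ℝ)
    (hc : ∀ k, 0 ≤ c k) (hbase : c base = 0)
    (μ : Measure (Fin N → Fin K → ℝ)) [IsProbabilityMeasure μ]
    (hac : μ ≪ volume)
    (hsupp : ∀ᵐ a ∂μ, ∀ n k, a n k ∈ Set.Icc (0:ℝ) 1) :
    ∀ᵐ a ∂μ, ∀ Z : Fin N → Fin K → ℝ,
      ((∀ n k, Z n k ∈ Set.Icc (0:ℝ) 1) ∧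
        (1 / N : ℝ) * ∑ n, ∑ k, Z n k * c k ≤ b ∧
        (∀ n, ∑ k, Z n k = 1) ∧
        (∀ W : Fin N → Fin K → ℝ,
          (∀ n k, W n k ∈ Set.Icc (0:ℝ) 1) →
          (1 / N : ℝ) * ∑ n, ∑ k, W n k * c k ≤ b →
          (∀ n, ∑ k, W n k = 1) →
          (1 / N : ℝ) * ∑ n, ∑ k, W n k * a n k ≤
            (1 / N : ℝ) * ∑ n, ∑ k, Z n k * a n k)) →
      (((Finset.univ : Finset (Fin N)).filter fun n =>
        (((Finset.univ : Finset (Fin K)).filter fun k => Z n k ≠ 0)).card ≠ 1)).card ≤ 1 :=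
  stmt_4_general hN c b μ hac
end

section
/- In the API selection setting, let p* be an optimal dual price and define the strategy s^{p*}(x_n) = argmax_k (a_k(x_n) − c_k·p*), with ties broken in favor of the smallest cost. Assume the accuracy values a_k(x_n) ∈ [0,1] are drawn from a continuous distribution, costs c_k ≥ 0 with c_{base} = 0. Then with probability 1, the deterministic assignment Z̃ defined by Z̃_{n,k} = 1_{s^{p*}(x_n) = k} is feasible for the ILP (satisfies (1/N)∑_{n,k} Z̃_{n,k} c_k ≤ b and each row sums to 1), and its average accuracy is at least the ILP optimal average accuracy minus 1/N. -/
/-!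
Along the curve `q = w (a (s) - c (s) p')` of cheapest feasible row prices, the dual objective
near the optimal price `p` is piecewise affine: for `p' > p` its slope is `b - w ∑ c (s n)`
(ties resolved toward the smallest cost) and for `p' < p` it is `b - w ∑ c (t n)` (ties resolved
toward the largest cost). Optimality of `p` forces the first slope to be nonnegative, which is
budget feasibility, and the second to be nonpositive when `p > 0`. For absolutely continuous
accuracies the breakpoint prices of different rows are almost surely distinct, so `s` and `t`
differ on at most one row, where they differ in accuracy by at most `1`; hence the complementary
slackness gap `p (b - w ∑ c (s n))` is at most `w`, and weak duality bounds every feasible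
assignment by `w ∑ a n (s n) + w`.
-/

open MeasureTheory Filter Topology Finset

variable {ι κ : Type*}

/-- Written without division: the breakpoint prices `(a n k - a n j) / (c k - c j)`, at which the
reduced values `a n k - c k * p` and `a n j - c j * p` tie, differ between any two rows. -/
def HasGenericBreakpoints (c : κ → ℝ) (a : ι → κ → ℝ) : Prop :=
  ∀ n m, n ≠ m → ∀ k j k' j', c k ≠ c j → c k' ≠ c j' →
    (a n k - a n j) * (c k' - c j') ≠ (a m k' - a m j') * (c k - c j)

theorem volume_setOf_breakpoints_eq_eq_zero [Fintype ι] [Fintype κ] (c : κ → ℝ) {n m : ι}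
    (hnm : n ≠ m) {k j k' j' : κ} (hkj : c k ≠ c j) (hkj' : c k' ≠ c j') :
    volume {a : ι → κ → ℝ |
      (a n k - a n j) * (c k' - c j') = (a m k' - a m j') * (c k - c j)} = 0 := by
  classical
  let ev (i : ι) (l : κ) : (ι → κ → ℝ) →ₗ[ℝ] ℝ :=
    (LinearMap.proj l).comp (LinearMap.proj (R := ℝ) (φ := fun _ : ι => κ → ℝ) i)
  let L := (c k' - c j') • (ev n k - ev n j) - (c k - c j) • (ev m k' - ev m j')
  have hker : {a : ι → κ → ℝ |
      (a n k - a n j) * (c k' - c j') = (a m k' - a m j') * (c k - c j)} = LinearMap.ker L := by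
    ext a
    simp only [Set.mem_ofPred_eq, SetLike.mem_coe, LinearMap.mem_ker, L, ev, LinearMap.sub_apply,
      LinearMap.smul_apply, LinearMap.comp_apply, LinearMap.proj_apply, smul_eq_mul]
    constructor <;> intro h <;> linarith
  rw [hker]
  refine Measure.addHaar_submodule _ _ fun htop => hkj' ?_
  have hkj : k ≠ j := fun h => hkj (congrArg c h)
  have hL := LinearMap.congr_fun (LinearMap.ker_eq_top.1 htop) (Pi.single n (Pi.single k 1))
  simpa [L, ev, hnm.symm, hkj.symm, sub_eq_zero] using hL

theorem ae_hasGenericBreakpoints [Fintype ι] [Fintype κ] (c : κ → ℝ) :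
    ∀ᵐ a ∂(volume : Measure (ι → κ → ℝ)), HasGenericBreakpoints c a := by
  simp only [HasGenericBreakpoints, ae_all_iff, eventually_imp_distrib_left]
  intro n m hnm k j k' j' hkj hkj'
  exact measure_eq_zero_iff_ae_notMem.1 (volume_setOf_breakpoints_eq_eq_zero c hnm hkj hkj')

theorem eventually_nhdsGT_forall_le [Finite κ] {α β : κ → ℝ} {p : ℝ} {i : κ}
    (hmax : ∀ k, α k - β k * p ≤ α i - β i * p)
    (htie : ∀ k, α k - β k * p = α i - β i * p → β i ≤ β k) :
    ∀ᶠ p' in 𝓝[>] p, ∀ k, α k - β k * p' ≤ α i - β i * p' := by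
  refine eventually_all.2 fun k => ?_
  rcases (hmax k).lt_or_eq with hlt | htie_k
  · exact ((ContinuousAt.eventually_lt (by fun_prop) (by fun_prop) hlt).mono fun _ h => h.le)
      |>.filter_mono nhdsWithin_le_nhds
  · filter_upwards [self_mem_nhdsWithin] with p' hp'
    nlinarith [htie k htie_k, Set.mem_Ioi.1 hp']

theorem eventually_nhdsLT_forall_le [Finite κ] {α β : κ → ℝ} {p : ℝ} {i : κ}
    (hmax : ∀ k, α k - β k * p ≤ α i - β i * p)
    (htie : ∀ k, α k - β k * p = α i - β i * p → β k ≤ β i) :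
    ∀ᶠ p' in 𝓝[<] p, ∀ k, α k - β k * p' ≤ α i - β i * p' := by
  refine eventually_all.2 fun k => ?_
  rcases (hmax k).lt_or_eq with hlt | htie_k
  · exact ((ContinuousAt.eventually_lt (by fun_prop) (by fun_prop) hlt).mono fun _ h => h.le)
      |>.filter_mono nhdsWithin_le_nhds
  · filter_upwards [self_mem_nhdsWithin] with p' hp'
    nlinarith [htie k htie_k, Set.mem_Iio.1 hp']

theorem exists_eq_and_forall_eq_le [Fintype κ] (g β : κ → ℝ) (i : κ) :
    ∃ j, g j = g i ∧ ∀ k, g k = g i → β k ≤ β j := by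
  classical
  obtain ⟨j, hj, hmax⟩ := (univ.filter fun k => g k = g i).exists_max_image β ⟨i, by simp⟩
  exact ⟨j, (mem_filter.1 hj).2, fun k hk => hmax k (by simp [hk])⟩

theorem sum_le_of_pairwise_eq_zero_or_eq_zero [Fintype ι] {M : Type*} [AddCommMonoid M]
    [Preorder M] {f : ι → M} {B : M} (hB : 0 ≤ B) (hf : ∀ n, f n ≤ B)
    (hzero : ∀ n m, n ≠ m → f n = 0 ∨ f m = 0) : ∑ n, f n ≤ B := by
  by_cases h : ∀ n, f n = 0
  · simpa [h] using hB
  push Not at h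
  obtain ⟨n, hn⟩ := h
  rw [sum_eq_single n (fun m _ hm => (hzero n m hm.symm).resolve_left hn) (by simp)]
  exact hf n

/-- The dual of the LP relaxation of the selection problem, with weight `w = 1 / N`:
budget price `p` and row prices `q n`. -/
def IsDualFeasible (w : ℝ) (a : ι → κ → ℝ) (c : κ → ℝ) (p : ℝ) (q : ι → ℝ) : Prop :=
  0 ≤ p ∧ (∀ n, 0 ≤ q n) ∧ ∀ n k, w * a n k ≤ w * c k * p + q n

def IsDualOptimal [Fintype ι] (w b : ℝ) (a : ι → κ → ℝ) (c : κ → ℝ) (p : ℝ) (q : ι → ℝ) :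
    Prop :=
  IsDualFeasible w a c p q ∧
    ∀ p' q', IsDualFeasible w a c p' q' → b * p + ∑ n, q n ≤ b * p' + ∑ n, q' n

section Dual

variable {w b p : ℝ} {a : ι → κ → ℝ} {c : κ → ℝ} {q : ι → ℝ} {base : κ} {s : ι → κ}

theorem isDualFeasible_of_forall_le (hw : 0 ≤ w) (hbase : c base = 0) (ha : ∀ n, 0 ≤ a n base)
    (hp : 0 ≤ p) (hs : ∀ n k, a n k - c k * p ≤ a n (s n) - c (s n) * p) :
    IsDualFeasible w a c p fun n => w * (a n (s n) - c (s n) * p) := by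
  refine ⟨hp, fun n => mul_nonneg hw ?_, fun n k => ?_⟩
  · have hn := hs n base
    rw [hbase, zero_mul, sub_zero] at hn
    linarith [ha n]
  · linarith [mul_le_mul_of_nonneg_left (hs n k) hw]

variable [Fintype ι]

theorem sum_le_of_isDualFeasible [Fintype κ] (hfeas : ∀ n k, w * a n k ≤ w * c k * p + q n)
    {Z : ι → κ → ℝ} (hZ : ∀ n k, 0 ≤ Z n k) (hZrow : ∀ n, ∑ k, Z n k = 1) :
    w * ∑ n, ∑ k, Z n k * a n k ≤ p * (w * ∑ n, ∑ k, Z n k * c k) + ∑ n, q n := by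
  calc w * ∑ n, ∑ k, Z n k * a n k = ∑ n, ∑ k, Z n k * (w * a n k) := by
        simp only [mul_sum, mul_left_comm]
    _ ≤ ∑ n, ∑ k, Z n k * (w * c k * p + q n) :=
        sum_le_sum fun n _ => sum_le_sum fun k _ => mul_le_mul_of_nonneg_left (hfeas n k) (hZ n k)
    _ = p * (w * ∑ n, ∑ k, Z n k * c k) + ∑ n, q n := by
        simp only [mul_add, sum_add_distrib, ← sum_mul, hZrow, one_mul, mul_sum]
        congr 1
        exact sum_congr rfl fun n _ => sum_congr rfl fun k _ => by ring

namespace IsDualOptimal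

/-- Comparing `(p, q)` with the feasible point `(p', w (a (s) - c (s) p'))`: the dual objective
along these points is affine in `p'` with slope `b - w ∑ c (s n)`. -/
theorem sub_mul_sub_sum_cost_nonpos (hopt : IsDualOptimal w b a c p q) (hw : 0 ≤ w)
    (hbase : c base = 0) (ha : ∀ n, 0 ≤ a n base) {p' : ℝ} (hp' : 0 ≤ p')
    (hs : ∀ n k, a n k - c k * p' ≤ a n (s n) - c (s n) * p') :
    (p - p') * (b - w * ∑ n, c (s n)) ≤ 0 := by
  have hle := hopt.2 p' _ (isDualFeasible_of_forall_le hw hbase ha hp' hs)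
  have hq : ∑ n, w * (a n (s n) - c (s n) * p) ≤ ∑ n, q n :=
    sum_le_sum fun n _ => by linarith [hopt.1.2.2 n (s n)]
  have hdiff : ∑ n, w * (a n (s n) - c (s n) * p') - ∑ n, w * (a n (s n) - c (s n) * p) =
      (p - p') * (w * ∑ n, c (s n)) := by
    rw [← sum_sub_distrib, mul_sum, mul_sum]
    exact sum_congr rfl fun n _ => by ring
  nlinarith

theorem sum_cost_le [Finite κ] (hopt : IsDualOptimal w b a c p q) (hw : 0 ≤ w)
    (hbase : c base = 0) (ha : ∀ n, 0 ≤ a n base)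
    (hs : ∀ n, (∀ k, a n k - c k * p ≤ a n (s n) - c (s n) * p) ∧
      (∀ k, a n k - c k * p = a n (s n) - c (s n) * p → c (s n) ≤ c k)) :
    w * ∑ n, c (s n) ≤ b := by
  have hev : ∀ᶠ p' in 𝓝[>] p, ∀ n k, a n k - c k * p' ≤ a n (s n) - c (s n) * p' :=
    eventually_all.2 fun n => eventually_nhdsGT_forall_le (hs n).1 (hs n).2
  obtain ⟨p', hs', hpp'⟩ := (hev.and self_mem_nhdsWithin).exists
  have hslope := hopt.sub_mul_sub_sum_cost_nonpos hw hbase ha (hopt.1.1.trans (le_of_lt hpp')) hs'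
  nlinarith [hpp']

theorem le_sum_cost [Finite κ] (hopt : IsDualOptimal w b a c p q) (hw : 0 ≤ w)
    (hbase : c base = 0) (ha : ∀ n, 0 ≤ a n base) (hp : 0 < p)
    (hs : ∀ n, (∀ k, a n k - c k * p ≤ a n (s n) - c (s n) * p) ∧
      (∀ k, a n k - c k * p = a n (s n) - c (s n) * p → c k ≤ c (s n))) :
    b ≤ w * ∑ n, c (s n) := by
  have hev : ∀ᶠ p' in 𝓝[<] p, 0 < p' ∧ ∀ n k, a n k - c k * p' ≤ a n (s n) - c (s n) * p' :=
    ((lt_mem_nhds hp).filter_mono nhdsWithin_le_nhds).and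
      (eventually_all.2 fun n => eventually_nhdsLT_forall_le (hs n).1 (hs n).2)
  obtain ⟨p', ⟨hp', hs'⟩, hpp'⟩ := (hev.and self_mem_nhdsWithin).exists
  have hslope := hopt.sub_mul_sub_sum_cost_nonpos hw hbase ha hp'.le hs'
  nlinarith [hpp']

theorem mul_sub_sum_cost_le [Fintype κ] (hopt : IsDualOptimal w b a c p q)
    (hgen : HasGenericBreakpoints c a) (ha : ∀ n k, a n k ∈ Set.Icc (0 : ℝ) 1) (hw : 0 ≤ w)
    (hbase : c base = 0) (hs : ∀ n k, a n k - c k * p ≤ a n (s n) - c (s n) * p) :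
    p * (b - w * ∑ n, c (s n)) ≤ w := by
  rcases hopt.1.1.eq_or_lt with rfl | hp
  · simpa using hw
  choose t ht using fun n => exists_eq_and_forall_eq_le (fun k => a n k - c k * p) c (s n)
  have hb : b ≤ w * ∑ n, c (t n) :=
    hopt.le_sum_cost hw hbase (fun n => (ha n base).1) hp
      fun n => ⟨fun k => (ht n).1 ▸ hs n k, fun k hk => (ht n).2 k (hk.trans (ht n).1)⟩
  have hgap : ∀ n, a n (t n) - a n (s n) = p * (c (t n) - c (s n)) := fun n => by
    linear_combination (ht n).1
  -- `p` is a breakpoint of every row where `c (t n) ≠ c (s n)`, so of at most one row.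
  have hgap_le : ∑ n, (a n (t n) - a n (s n)) ≤ 1 := by
    refine sum_le_of_pairwise_eq_zero_or_eq_zero zero_le_one
      (fun n => by linarith [(ha n (t n)).2, (ha n (s n)).1]) fun n m hnm => ?_
    by_contra! h
    refine hgen n m hnm (t n) (s n) (t m) (s m) ?_ ?_ ?_
    · exact fun hc => h.1 (by rw [hgap, hc, sub_self, mul_zero])
    · exact fun hc => h.2 (by rw [hgap, hc, sub_self, mul_zero])
    · rw [hgap, hgap]; ring
  calc p * (b - w * ∑ n, c (s n)) ≤ p * (w * ∑ n, c (t n) - w * ∑ n, c (s n)) := by gcongr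
    _ = w * ∑ n, (a n (t n) - a n (s n)) := by
      simp only [hgap, ← mul_sub, ← sum_sub_distrib, mul_sum]
      exact sum_congr rfl fun n _ => by ring
    _ ≤ w := by simpa using mul_le_mul_of_nonneg_left hgap_le hw

theorem sub_le_sum [Fintype κ] (hopt : IsDualOptimal w b a c p q)
    (hgen : HasGenericBreakpoints c a) (ha : ∀ n k, a n k ∈ Set.Icc (0 : ℝ) 1) (hw : 0 ≤ w)
    (hbase : c base = 0) (hs : ∀ n k, a n k - c k * p ≤ a n (s n) - c (s n) * p)
    {Z : ι → κ → ℝ} (hZ : ∀ n k, 0 ≤ Z n k) (hZc : w * ∑ n, ∑ k, Z n k * c k ≤ b)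
    (hZrow : ∀ n, ∑ k, Z n k = 1) :
    w * ∑ n, ∑ k, Z n k * a n k - w ≤ w * ∑ n, a n (s n) := by
  have hweak := sum_le_of_isDualFeasible hopt.1.2.2 hZ hZrow
  have hq := hopt.2 p _ (isDualFeasible_of_forall_le hw hbase (fun n => (ha n base).1) hopt.1.1 hs)
  have hslack := hopt.mul_sub_sum_cost_le hgen ha hw hbase hs
  have hsum : ∑ n, w * (a n (s n) - c (s n) * p) =
      w * ∑ n, a n (s n) - p * (w * ∑ n, c (s n)) := by
    simp only [mul_sub, sum_sub_distrib, mul_sum]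
    congr 1
    exact sum_congr rfl fun n _ => by ring
  nlinarith [mul_le_mul_of_nonneg_left hZc hopt.1.1]

end IsDualOptimal

end Dual

theorem stmt_8_general {N K : ℕ}
    (c : Fin K → ℝ) (base : Fin K) (b : ℝ)
    (hbase : c base = 0)
    (μ : Measure (Fin N → Fin K → ℝ))
    (hac : μ ≪ volume)
    (hsupp : ∀ᵐ a ∂μ, ∀ n k, a n k ∈ Set.Icc (0:ℝ) 1) :
    ∀ᵐ a ∂μ, ∀ (p : ℝ) (q : Fin N → ℝ),
      0 ≤ p → (∀ n, 0 ≤ q n) →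
      (∀ n k, (1 / N : ℝ) * a n k ≤ (1 / N : ℝ) * c k * p + q n) →
      (∀ (p' : ℝ) (q' : Fin N → ℝ), 0 ≤ p' → (∀ n, 0 ≤ q' n) →
        (∀ n k, (1 / N : ℝ) * a n k ≤ (1 / N : ℝ) * c k * p' + q' n) →
        b * p + ∑ n, q n ≤ b * p' + ∑ n, q' n) →
      ∀ s : Fin N → Fin K,
        (∀ n, (∀ k, a n k - c k * p ≤ a n (s n) - c (s n) * p) ∧
          (∀ k, a n k - c k * p = a n (s n) - c (s n) * p → c (s n) ≤ c k)) →
        (1 / N : ℝ) * ∑ n, c (s n) ≤ b ∧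
        ∀ Z : Fin N → Fin K → ℝ,
          (∀ n k, Z n k = 0 ∨ Z n k = 1) →
          (1 / N : ℝ) * ∑ n, ∑ k, Z n k * c k ≤ b →
          (∀ n, ∑ k, Z n k = 1) →
          (1 / N : ℝ) * ∑ n, ∑ k, Z n k * a n k - 1 / N ≤
            (1 / N : ℝ) * ∑ n, a n (s n) := by
  filter_upwards [hsupp, hac.ae_le (ae_hasGenericBreakpoints c)] with a ha hgen
  intro p q hp hq hfeas hmin s hs
  have hw : (0 : ℝ) ≤ 1 / N := by positivity
  have hopt : IsDualOptimal (1 / N) b a c p q :=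
    ⟨⟨hp, hq, hfeas⟩, fun p' q' h => hmin p' q' h.1 h.2.1 h.2.2⟩
  have hZ : ∀ Z : Fin N → Fin K → ℝ, (∀ n k, Z n k = 0 ∨ Z n k = 1) → ∀ n k, 0 ≤ Z n k :=
    fun Z hZ n k => by rcases hZ n k with h | h <;> simp [h]
  exact ⟨hopt.sum_cost_le hw hbase (fun n => (ha n base).1) hs,
    fun Z hZ01 => hopt.sub_le_sum hgen ha hw hbase (fun n => (hs n).1) (hZ Z hZ01)⟩

/-- Dual-based selection guarantee: almost surely over the accuracy values, for any
optimal dual solution (p*, q*), the strategy selecting argmax_k (aₖ(xₙ) − cₖ·p*)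
with ties broken toward the smallest cost is budget-feasible and achieves average
accuracy within 1/N of every feasible ILP solution. -/
theorem stmt_8 {N K : ℕ} (hN : 0 < N) (hK : 0 < K)
    (c : Fin K → ℝ) (base : Fin K) (b : ℝ)
    (hc : ∀ k, 0 ≤ c k) (hbase : c base = 0)
    (μ : Measure (Fin N → Fin K → ℝ)) [IsProbabilityMeasure μ]
    (hac : μ ≪ volume)
    (hsupp : ∀ᵐ a ∂μ, ∀ n k, a n k ∈ Set.Icc (0:ℝ) 1) :
    ∀ᵐ a ∂μ, ∀ (p : ℝ) (q : Fin N → ℝ),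
      0 ≤ p → (∀ n, 0 ≤ q n) →
      (∀ n k, (1 / N : ℝ) * a n k ≤ (1 / N : ℝ) * c k * p + q n) →
      (∀ (p' : ℝ) (q' : Fin N → ℝ), 0 ≤ p' → (∀ n, 0 ≤ q' n) →
        (∀ n k, (1 / N : ℝ) * a n k ≤ (1 / N : ℝ) * c k * p' + q' n) →
        b * p + ∑ n, q n ≤ b * p' + ∑ n, q' n) →
      ∀ s : Fin N → Fin K,
        (∀ n, (∀ k, a n k - c k * p ≤ a n (s n) - c (s n) * p) ∧
          (∀ k, a n k - c k * p = a n (s n) - c (s n) * p → c (s n) ≤ c k)) →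
        (1 / N : ℝ) * ∑ n, c (s n) ≤ b ∧
        ∀ Z : Fin N → Fin K → ℝ,
          (∀ n k, Z n k = 0 ∨ Z n k = 1) →
          (1 / N : ℝ) * ∑ n, ∑ k, Z n k * c k ≤ b →
          (∀ n, ∑ k, Z n k = 1) →
          (1 / N : ℝ) * ∑ n, ∑ k, Z n k * a n k - 1 / N ≤
            (1 / N : ℝ) * ∑ n, a n (s n) :=
  stmt_8_general c base b hbase μ hac hsupp
end

section
/- Let s be a fixed selection strategy with per-sample cost η(x) ∈ [0, C] for some constant C = ‖c‖_∞. Let x₁^{Tr},…,x_{N^{Tr}}^{Tr} and x₁,…,x_N be independent i.i.d. samples from the same distribution. Suppose the empirical training cost satisfies (1/N^{Tr})∑_n η(x_n^{Tr}) ≤ (1−δ)b for δ ≥ (C/b)·[√((log 4 − log ε)/N) + √((log 4 − log ε)/N^{Tr})]. Then with probability at least 1 − ε, the empirical test cost satisfies (1/N)∑_n η(x_n) ≤ b. -/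
open MeasureTheory ProbabilityTheory

/-!
The test stream can only violate the budget `b` if the test mean exceeds the common expectation
`m` by more than `C √(L/N)`, or the training mean falls below `m` by more than `C √(L/N_Tr)`,
where `L = log 4 - log ε`: otherwise the two deviations together are at most `δ b`, which is
exactly the slack between `(1 - δ) b` and `b`. By Hoeffding's inequality each of these two
events has probability at most `exp (-L) = ε / 4`, and a union bound finishes the proof.
-/

open Real Finset

theorem compl_setOf_le_imp_le_subset_union {Ω : Type*} {tr te : Ω → ℝ} {m τ τ' δ b : ℝ}
    (hdev : τ + τ' ≤ δ * b) :
    {ω | tr ω ≤ (1 - δ) * b → te ω ≤ b}ᶜ ⊆ {ω | m + τ ≤ te ω} ∪ {ω | tr ω ≤ m - τ'} := by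
  intro ω hω
  simp only [Set.mem_compl_iff, Set.mem_ofPred_eq, Classical.not_imp, not_le] at hω
  by_contra! h
  simp only [Set.mem_union, Set.mem_ofPred_eq, not_or, not_le] at h
  linarith

section Hoeffding

variable {Ω ι : Type*} [MeasurableSpace Ω] {μ : Measure Ω} [IsProbabilityMeasure μ]
  {X : ι → Ω → ℝ} {a b m : ℝ}

theorem measureReal_sum_sub_ge_le_of_mem_Icc
    (hmeas : ∀ i, AEMeasurable (X i) μ) (hindep : iIndepFun X μ)
    (hbdd : ∀ i, ∀ᵐ ω ∂μ, X i ω ∈ Set.Icc a b) (hmean : ∀ i, μ[X i] = m)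
    (s : Finset ι) {t : ℝ} (ht : 0 ≤ t) :
    μ.real {ω | t ≤ ∑ i ∈ s, (X i ω - m)} ≤ exp (-2 * t ^ 2 / (#s * (b - a) ^ 2)) := by
  have hsubG : ∀ i ∈ s, HasSubgaussianMGF (fun ω ↦ X i ω - m) ((‖b - a‖₊ / 2) ^ 2) μ :=
    fun i _ ↦ hmean i ▸ hasSubgaussianMGF_of_mem_Icc (hmeas i) (hbdd i)
  have hindep' : iIndepFun (fun i ω ↦ X i ω - m) μ :=
    hindep.comp (fun _ x ↦ x - m) fun _ ↦ measurable_id.sub_const m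
  refine (HasSubgaussianMGF.measure_sum_ge_le_of_iIndepFun hindep' hsubG ht).trans_eq ?_
  simp only [sum_const, nsmul_eq_mul, NNReal.coe_mul, NNReal.coe_natCast, NNReal.coe_pow,
    NNReal.coe_div, NNReal.coe_ofNat, coe_nnnorm, norm_eq_abs, div_pow, sq_abs]
  rw [show (2 : ℝ) * (#s * ((b - a) ^ 2 / 2 ^ 2)) = #s * (b - a) ^ 2 / 2 by ring,
    div_div_eq_mul_div]
  congr 1
  ring

theorem measureReal_mean_ge_add_le_exp_neg_of_mem_Icc [Fintype ι] [Nonempty ι]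
    (hmeas : ∀ i, AEMeasurable (X i) μ) (hindep : iIndepFun X μ)
    (hbdd : ∀ i, ∀ᵐ ω ∂μ, X i ω ∈ Set.Icc a b) (hmean : ∀ i, μ[X i] = m)
    (hab : a < b) {L : ℝ} (hL : 0 ≤ L) :
    μ.real {ω | m + (b - a) * √(L / Fintype.card ι) ≤ (1 / Fintype.card ι) * ∑ i, X i ω}
      ≤ exp (-L) := by
  have hn : (0 : ℝ) < Fintype.card ι := Nat.cast_pos.2 Fintype.card_pos
  have hba : 0 < b - a := sub_pos.2 hab
  have hsub : {ω | m + (b - a) * √(L / Fintype.card ι) ≤ (1 / Fintype.card ι) * ∑ i, X i ω}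
      ⊆ {ω | Fintype.card ι * ((b - a) * √(L / Fintype.card ι)) ≤ ∑ i, (X i ω - m)} := by
    intro ω hω
    simp only [Set.mem_ofPred_eq, sum_sub_distrib, sum_const, card_univ, nsmul_eq_mul] at hω ⊢
    rw [one_div_mul_eq_div, le_div_iff₀ hn] at hω
    linarith
  -- Hoeffding gives `exp (-2 L)`; only `exp (-L)` is needed.
  refine (measureReal_mono hsub).trans <| (measureReal_sum_sub_ge_le_of_mem_Icc hmeas hindep
    hbdd hmean univ (by positivity)).trans ?_
  rw [card_univ, exp_le_exp, mul_pow, mul_pow, sq_sqrt (by positivity)]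
  field_simp
  linarith

theorem measureReal_mean_le_sub_le_exp_neg_of_mem_Icc [Fintype ι] [Nonempty ι]
    (hmeas : ∀ i, AEMeasurable (X i) μ) (hindep : iIndepFun X μ)
    (hbdd : ∀ i, ∀ᵐ ω ∂μ, X i ω ∈ Set.Icc a b) (hmean : ∀ i, μ[X i] = m)
    (hab : a < b) {L : ℝ} (hL : 0 ≤ L) :
    μ.real {ω | (1 / Fintype.card ι) * ∑ i, X i ω ≤ m - (b - a) * √(L / Fintype.card ι)}
      ≤ exp (-L) := by
  refine le_trans (measureReal_mono fun ω hω ↦ ?_)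
    (measureReal_mean_ge_add_le_exp_neg_of_mem_Icc (X := fun i ω ↦ -X i ω) (m := -m)
      (fun i ↦ (hmeas i).neg) (hindep.comp (fun _ x ↦ -x) fun _ ↦ measurable_neg)
      (fun i ↦ (hbdd i).mono fun _ h ↦ ⟨neg_le_neg h.2, neg_le_neg h.1⟩)
      (fun i ↦ by rw [integral_neg, hmean]) (neg_lt_neg hab) hL)
  simp only [Set.mem_ofPred_eq, sum_neg_distrib, mul_neg, neg_sub_neg] at hω ⊢
  linarith

theorem one_sub_le_measureReal_of_compl_subset_union {s t u : Set Ω} (h : sᶜ ⊆ t ∪ u) :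
    1 - (μ.real t + μ.real u) ≤ μ.real s := by
  have : 1 ≤ μ.real s + μ.real sᶜ := by
    rw [← probReal_univ (μ := μ), ← Set.union_compl_self s]
    exact measureReal_union_le _ _
  linarith [(measureReal_mono (μ := μ) h).trans (measureReal_union_le t u)]

end Hoeffding

/-- Feasibility transfer: if the empirical training cost is at most (1−δ)b with δ
exceeding the stated deviation threshold, then with probability at least 1 − ε the
empirical test cost is at most b. -/
theorem stmt_9 {Ω : Type*} [MeasurableSpace Ω] (μ : Measure Ω) [IsProbabilityMeasure μ]
    {NTr N : ℕ} (hNTr : 0 < NTr) (hN : 0 < N)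
    (η : (Fin NTr ⊕ Fin N) → Ω → ℝ) (C b δ ε : ℝ)
    (hmeas : ∀ i, Measurable (η i))
    (hindep : iIndepFun η μ)
    (hident : ∀ i j, IdentDistrib (η i) (η j) μ μ)
    (hbdd : ∀ i, ∀ᵐ ω ∂μ, η i ω ∈ Set.Icc (0:ℝ) C)
    (hb : 0 < b) (hε : ε ∈ Set.Ioo (0:ℝ) 1)
    (hδ : (C / b) * (Real.sqrt ((Real.log 4 - Real.log ε) / N) +
        Real.sqrt ((Real.log 4 - Real.log ε) / NTr)) ≤ δ) :
    1 - ε ≤ (μ {ω |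
      (1 / NTr : ℝ) * ∑ n : Fin NTr, η (Sum.inl n) ω ≤ (1 - δ) * b →
      (1 / N : ℝ) * ∑ n : Fin N, η (Sum.inr n) ω ≤ b}).toReal := by
  set S := {ω | (1 / NTr : ℝ) * ∑ n : Fin NTr, η (Sum.inl n) ω ≤ (1 - δ) * b →
      (1 / N : ℝ) * ∑ n : Fin N, η (Sum.inr n) ω ≤ b}
  change 1 - ε ≤ μ.real S
  obtain ⟨ω₀, hω₀⟩ := (hbdd (Sum.inl ⟨0, hNTr⟩)).exists
  -- For `C = 0` the Hoeffding bound is vacuous, but then the test costs vanish a.s.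
  rcases (hω₀.1.trans hω₀.2).eq_or_lt with rfl | hC
  · have hS : S =ᵐ[μ] (Set.univ : Set Ω) := Filter.eventuallyEq_univ.2 <| by
      filter_upwards [ae_all_iff.2 fun n : Fin N ↦ hbdd (Sum.inr n)] with ω hω _
      simp [le_antisymm (hω _).2 (hω _).1, hb.le]
    rw [measureReal_congr hS, probReal_univ]
    linarith [hε.1]
  set L := log 4 - log ε
  have hL : 0 < L := sub_pos.2 (log_lt_log hε.1 (by linarith [hε.2]))
  have hexpL : exp (-L) = ε / 4 := by rw [neg_sub, exp_sub, exp_log hε.1, exp_log four_pos]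
  set m := μ[η (Sum.inl ⟨0, hNTr⟩)]
  have hmean : ∀ i, μ[η i] = m := fun i ↦ (hident i _).integral_eq
  have : NeZero N := ⟨hN.ne'⟩
  have : NeZero NTr := ⟨hNTr.ne'⟩
  have htest := measureReal_mean_ge_add_le_exp_neg_of_mem_Icc (X := fun n : Fin N ↦ η (.inr n))
    (fun _ ↦ (hmeas _).aemeasurable) (hindep.precomp Sum.inr_injective) (fun _ ↦ hbdd _)
    (fun _ ↦ hmean _) hC hL.le
  have htrain := measureReal_mean_le_sub_le_exp_neg_of_mem_Icc (X := fun n : Fin NTr ↦ η (.inl n))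
    (fun _ ↦ (hmeas _).aemeasurable) (hindep.precomp Sum.inl_injective) (fun _ ↦ hbdd _)
    (fun _ ↦ hmean _) hC hL.le
  simp only [Fintype.card_fin, sub_zero, hexpL] at htest htrain
  have hdev : C * √(L / N) + C * √(L / NTr) ≤ δ * b := by
    rw [div_mul_eq_mul_div, div_le_iff₀ hb] at hδ
    linarith
  refine le_trans ?_ (one_sub_le_measureReal_of_compl_subset_union
    (compl_setOf_le_imp_le_subset_union (m := m) hdev))
  linarith [hε.1]
end

section
/- Partition a price interval [0, P] into M subintervals with endpoints p_j = jP/(M−1), j = 0,…,M−1, and suppose the per-sample reward function p ↦ r^{s^p}(x) is piecewise constant in p, changing value on sample x only when x falls in a 'boundary set' A_j associated with the subinterval containing p, where Pr[x ∈ A_j] ≤ u‖c‖₁/(M·min_{c_k≠0} c_k²) for a density bound u. Then for i.i.d. samples x₁,…,x_N and any p ∈ [p_m, p_{m+1}], with probability at least 1 − ε, |(1/N)∑_n r^{s^p}(x_n) − (1/N)∑_n r^{s^{p_m}}(x_n)| ≤ u‖c‖₁/(M·min_{c_k≠0} c_k²) + √((log M + log 2 − log ε)/(2N)). -/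
open MeasureTheory ProbabilityTheory

/-! Off the boundary set `A_m` the rewards at `p` and `p_m` agree, and both lie in `[0, 1]`, so
the two empirical rewards differ by at most the empirical frequency of `A_m`. That frequency is
an average of i.i.d. indicators with mean `ν(A_m)`, and Hoeffding's inequality bounds the
probability that it exceeds `ν(A_m) + t` by `exp (-2 N t²)`; the choice
`t = √((log M + log 2 - log ε) / (2N))` makes this at most `ε / (2M) ≤ ε`. -/

theorem abs_sub_le_indicator_of_eqOn_compl {X : Type*} {f g : X → ℝ} {S : Set X}
    (hf : ∀ y, f y ∈ Set.Icc (0 : ℝ) 1) (hg : ∀ y, g y ∈ Set.Icc (0 : ℝ) 1)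
    (hfg : ∀ y ∉ S, f y = g y) (y : X) :
    |f y - g y| ≤ S.indicator 1 y := by
  by_cases hy : y ∈ S
  · obtain ⟨hf0, hf1⟩ := hf y
    obtain ⟨hg0, hg1⟩ := hg y
    rw [Set.indicator_of_mem hy, Pi.one_apply, abs_sub_le_iff]
    constructor <;> linarith
  · rw [Set.indicator_of_notMem hy, hfg y hy, sub_self, abs_zero]

theorem abs_mean_sub_mean_le {N : ℕ} {a b d : Fin N → ℝ} (h : ∀ n, |a n - b n| ≤ d n) :
    |(1 / N : ℝ) * ∑ n, a n - (1 / N : ℝ) * ∑ n, b n| ≤ (1 / N : ℝ) * ∑ n, d n := by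
  rw [← mul_sub, ← Finset.sum_sub_distrib, abs_mul, abs_of_nonneg (by positivity)]
  gcongr
  exact (Finset.abs_sum_le_sum_abs _ _).trans (Finset.sum_le_sum fun n _ => h n)

theorem exp_neg_two_mul_sq_sqrt_le {N ε L : ℝ} (hN : 0 < N) (hε : 0 < ε) (hL0 : 0 ≤ L)
    (hL : -Real.log ε ≤ L) : Real.exp (-2 * N * Real.sqrt (L / (2 * N)) ^ 2) ≤ ε := by
  rw [Real.sq_sqrt (div_nonneg hL0 (by positivity)), ← Real.exp_log hε]
  refine Real.exp_le_exp.mpr ?_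
  field_simp
  linarith

theorem measureReal_integral_add_le_mean_le {X Ω : Type*} [MeasurableSpace X]
    [MeasurableSpace Ω] {μ : Measure Ω} {ν : Measure X} {N : ℕ} (hN : 0 < N)
    {x : Fin N → Ω → X} (hmeas : ∀ n, Measurable (x n)) (hindep : iIndepFun x μ)
    (hmap : ∀ n, μ.map (x n) = ν) {f : X → ℝ} (hf : Measurable f)
    (hf01 : ∀ y, f y ∈ Set.Icc (0 : ℝ) 1) {t : ℝ} (ht : 0 ≤ t) :
    μ.real {ω | ∫ y, f y ∂ν + t ≤ (N : ℝ)⁻¹ * ∑ n, f (x n ω)} ≤ Real.exp (-2 * N * t ^ 2) := by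
  have := hindep.isProbabilityMeasure
  have hmean (n : Fin N) : ∫ ω, f (x n ω) ∂μ = ∫ y, f y ∂ν := by
    rw [← hmap n, integral_map (hmeas n).aemeasurable hf.aestronglyMeasurable]
  have hsubG : ∀ n ∈ Finset.univ,
      HasSubgaussianMGF (fun ω => f (x n ω) - ∫ y, f y ∂ν) (1 / 4) μ := by
    intro n _
    have h := hasSubgaussianMGF_of_mem_Icc (μ := μ) (X := fun ω => f (x n ω))
      (hf.comp (hmeas n)).aemeasurable (ae_of_all _ fun ω => hf01 (x n ω))
    rw [hmean] at h
    convert h using 1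
    ext
    norm_num
  have hindep' : iIndepFun (fun n ω => f (x n ω) - ∫ y, f y ∂ν) μ :=
    hindep.comp (fun _ y => f y - ∫ y, f y ∂ν) fun _ => hf.sub_const _
  have hN' : (0 : ℝ) < N := by exact_mod_cast hN
  have hset : {ω | ∫ y, f y ∂ν + t ≤ (N : ℝ)⁻¹ * ∑ n, f (x n ω)} =
      {ω | N * t ≤ ∑ n, (f (x n ω) - ∫ y, f y ∂ν)} := by
    ext ω
    simp only [Set.mem_ofPred_eq, Finset.sum_sub_distrib, Finset.sum_const, Finset.card_univ,
      Fintype.card_fin, nsmul_eq_mul, le_inv_mul_iff₀ hN']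
    constructor <;> intro h <;> linarith
  calc μ.real {ω | ∫ y, f y ∂ν + t ≤ (N : ℝ)⁻¹ * ∑ n, f (x n ω)}
      ≤ Real.exp (-(N * t) ^ 2 / (2 * ↑(∑ _n : Fin N, (1 / 4 : NNReal)))) := by
        rw [hset]
        exact HasSubgaussianMGF.measure_sum_ge_le_of_iIndepFun hindep' hsubG (by positivity)
    _ = Real.exp (-2 * N * t ^ 2) := by
        congr 1
        push_cast [Finset.sum_const, Finset.card_univ, Fintype.card_fin, nsmul_eq_mul]
        field_simp
        ring

theorem stmt_18_general {X : Type*} [MeasurableSpace X] {Ω : Type*} [MeasurableSpace Ω]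
    (μ : Measure Ω) [IsProbabilityMeasure μ] {N M K : ℕ} (hN : 0 < N)
    (x : Fin N → Ω → X) (ν : Measure X)
    (hmeas : ∀ n, Measurable (x n))
    (hindep : iIndepFun x μ)
    (hmap : ∀ n, Measure.map (x n) μ = ν)
    (r : ℝ → X → ℝ) (hr : ∀ p y, r p y ∈ Set.Icc (0:ℝ) 1)
    (P : ℝ)
    (c : Fin K → ℝ) (u : ℝ)
    (hcne : (((Finset.univ : Finset (Fin K)).filter fun k => c k ≠ 0)).Nonempty)
    (A : Fin M → Set X) (hAmeas : ∀ j, MeasurableSet (A j))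
    (hprob : ∀ j, (ν (A j)).toReal ≤
      u * (∑ k, |c k|) / (M * ((((Finset.univ : Finset (Fin K)).filter
        fun k => c k ≠ 0).image c).min' (hcne.image c))^2))
    (m : ℕ) (hm : m + 1 < M) (p : ℝ)
    (hoff : ∀ y, y ∉ A ⟨m, Nat.lt_of_succ_lt hm⟩ →
      r p y = r ((m : ℝ) * P / ((M : ℝ) - 1)) y)
    (ε : ℝ) (hε : ε ∈ Set.Ioo (0:ℝ) 1) :
    1 - ε ≤ (μ {ω |
      |(1 / N : ℝ) * ∑ n, r p (x n ω) -
        (1 / N : ℝ) * ∑ n, r ((m : ℝ) * P / ((M : ℝ) - 1)) (x n ω)| ≤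
      u * (∑ k, |c k|) / (M * ((((Finset.univ : Finset (Fin K)).filter
        fun k => c k ≠ 0).image c).min' (hcne.image c))^2) +
      Real.sqrt ((Real.log M + Real.log 2 - Real.log ε) / (2 * N))}).toReal := by
  set pm := (m : ℝ) * P / ((M : ℝ) - 1)
  set q := u * (∑ k, |c k|) / (M * ((((Finset.univ : Finset (Fin K)).filter
    fun k => c k ≠ 0).image c).min' (hcne.image c))^2)
  set jm : Fin M := ⟨m, Nat.lt_of_succ_lt hm⟩
  set S := A jm
  set L := Real.log M + Real.log 2 - Real.log ε
  set t := Real.sqrt (L / (2 * N))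
  have hlogM : 0 ≤ Real.log M := Real.log_nonneg (by exact_mod_cast (by omega : 1 ≤ M))
  have hL : -Real.log ε ≤ L := by linarith [Real.log_nonneg (by norm_num : (1 : ℝ) ≤ 2)]
  have hdeviation : Real.exp (-2 * N * t ^ 2) ≤ ε :=
    exp_neg_two_mul_sq_sqrt_le (by exact_mod_cast hN) hε.1
      (by linarith [Real.log_nonpos hε.1.le hε.2.le]) hL
  set B := {ω | ν.real S + t ≤ (N : ℝ)⁻¹ * ∑ n, S.indicator 1 (x n ω)}
  have hB : μ.real B ≤ ε := by
    have hS01 (y : X) : S.indicator 1 y ∈ Set.Icc (0 : ℝ) 1 := by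
      by_cases hy : y ∈ S <;> simp [hy]
    have h := measureReal_integral_add_le_mean_le hN hmeas hindep hmap
      (measurable_one.indicator (hAmeas jm)) hS01 (Real.sqrt_nonneg (L / (2 * N)))
    rw [integral_indicator_one (hAmeas jm)] at h
    exact h.trans hdeviation
  have hBmeas : MeasurableSet B :=
    measurableSet_le measurable_const (measurable_const.mul (Finset.measurable_sum _
      fun n _ => (measurable_one.indicator (hAmeas jm)).comp (hmeas n)))
  have hgood : Bᶜ ⊆ {ω | |(1 / N : ℝ) * ∑ n, r p (x n ω) -
      (1 / N : ℝ) * ∑ n, r pm (x n ω)| ≤ q + t} := by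
    intro ω hω
    have hmean := abs_mean_sub_mean_le fun n =>
      abs_sub_le_indicator_of_eqOn_compl (hr p) (hr pm) hoff (x n ω)
    simp only [B, Set.mem_compl_iff, Set.mem_ofPred_eq, not_le, ← one_div] at hω
    have hprobS : ν.real S ≤ q := hprob jm
    exact hmean.trans (by linarith)
  calc 1 - ε ≤ 1 - μ.real B := by linarith
    _ = μ.real Bᶜ := by rw [measureReal_compl hBmeas, probReal_univ]
    _ ≤ _ := measureReal_mono hgood

/-- Price-grid discretization bound: for a price p in the subinterval [p_m, p_{m+1}]
of the grid p_j = jP/(M−1), if the per-sample reward differs from its value at p_m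
only on a boundary set A_m of probability at most u‖c‖₁/(M·min_{cₖ≠0} cₖ²), then with
probability at least 1 − ε the empirical rewards at p and p_m differ by at most that
probability bound plus √((log M + log 2 − log ε)/(2N)). -/
theorem stmt_18 {X : Type*} [MeasurableSpace X] {Ω : Type*} [MeasurableSpace Ω]
    (μ : Measure Ω) [IsProbabilityMeasure μ] {N M K : ℕ} (hN : 0 < N) (hM : 2 ≤ M)
    (x : Fin N → Ω → X) (ν : Measure X) [IsProbabilityMeasure ν]
    (hmeas : ∀ n, Measurable (x n))
    (hindep : iIndepFun x μ)
    (hmap : ∀ n, Measure.map (x n) μ = ν)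
    (r : ℝ → X → ℝ) (hr : ∀ p y, r p y ∈ Set.Icc (0:ℝ) 1)
    (P : ℝ) (hP : 0 < P)
    (c : Fin K → ℝ) (u : ℝ) (hu : 0 ≤ u)
    (hcne : (((Finset.univ : Finset (Fin K)).filter fun k => c k ≠ 0)).Nonempty)
    (A : Fin M → Set X) (hAmeas : ∀ j, MeasurableSet (A j))
    (hprob : ∀ j, (ν (A j)).toReal ≤
      u * (∑ k, |c k|) / (M * ((((Finset.univ : Finset (Fin K)).filter
        fun k => c k ≠ 0).image c).min' (hcne.image c))^2))
    (m : ℕ) (hm : m + 1 < M) (p : ℝ)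
    (hp : p ∈ Set.Icc ((m : ℝ) * P / ((M : ℝ) - 1)) (((m : ℝ) + 1) * P / ((M : ℝ) - 1)))
    (hoff : ∀ y, y ∉ A ⟨m, Nat.lt_of_succ_lt hm⟩ →
      r p y = r ((m : ℝ) * P / ((M : ℝ) - 1)) y)
    (ε : ℝ) (hε : ε ∈ Set.Ioo (0:ℝ) 1) :
    1 - ε ≤ (μ {ω |
      |(1 / N : ℝ) * ∑ n, r p (x n ω) -
        (1 / N : ℝ) * ∑ n, r ((m : ℝ) * P / ((M : ℝ) - 1)) (x n ω)| ≤
      u * (∑ k, |c k|) / (M * ((((Finset.univ : Finset (Fin K)).filter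
        fun k => c k ≠ 0).image c).min' (hcne.image c))^2) +
      Real.sqrt ((Real.log M + Real.log 2 - Real.log ε) / (2 * N))}).toReal :=
  stmt_18_general μ hN x ν hmeas hindep hmap r hr P c u hcne A hAmeas hprob m hm p hoff ε hε
end
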